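/- If K is a simplex (convex hull of affinely independent points), then any two measurements on K are compatible: for measurements (f_i) and (g_j) with effects in E(K) summing to 1_K, there exist effects h_{ij} ∈ E(K) with f_i = Σ_j h_{ij} and g_j = Σ_i h_{ij}. -/

import Mathlib

/-!
A simplex is a classical state space: an affine function on it is determined by its values at the
vertices `s k`, and any prescribed vertex values are attained by a combination of the barycentric
coordinate functions. So the joint measurement can be chosen vertex by vertex as the product
`h i j (s k) = f i (s k) * g j (s k)`, whose marginals at each vertex are `f i (s k)` and
`g j (s k)` because both measurements sum to `1` there.
-/

open Finset

variable {V : Type*} [AddCommGroup V] [Module ℝ V]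

/-- The effect algebra `E(K)`: affine functions with values in `[0,1]` on `K`. -/
def effectAlgebra (K : Set V) : Set (V →ᵃ[ℝ] ℝ) :=
  {f | ∀ x ∈ K, f x ∈ Set.Icc (0 : ℝ) 1}

theorem AffineMap.finset_sum_apply {k W P W₂ ι : Type*} [Ring k] [AddCommGroup W] [Module k W]
    [AddTorsor W P] [AddCommGroup W₂] [Module k W₂] (t : Finset ι) (F : ι → P →ᵃ[k] W₂)
    (x : P) : (∑ i ∈ t, F i) x = ∑ i ∈ t, F i x :=
  map_sum (AddMonoidHom.mk' (fun G : P →ᵃ[k] W₂ => G x) fun _ _ => rfl) F t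

/-- The functionals are the barycentric coordinates of an affine basis extending `p`. -/
theorem AffineIndependent.exists_affineMap_dual {k W P ι : Type*} [Field k] [AddCommGroup W]
    [Module k W] [AddTorsor W P] [DecidableEq ι] {p : ι → P} (hp : AffineIndependent k p) :
    ∃ b : ι → P →ᵃ[k] k, ∀ i j, b i (p j) = if i = j then 1 else 0 := by
  classical
  obtain ⟨t, hpt, ht, hspan⟩ := exists_subset_affineIndependent_affineSpan_eq_top hp.range
  let B : AffineBasis t k P := ⟨fun q => q, ht, by simpa using hspan⟩
  have hB : ∀ j, B ⟨p j, hpt ⟨j, rfl⟩⟩ = p j := fun _ => rfl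
  refine ⟨fun i => B.coord ⟨p i, hpt ⟨i, rfl⟩⟩, fun i j => ?_⟩
  rw [← hB j, B.coord_apply]
  simp [hp.injective.eq_iff]

theorem AffineMap.sum_smul_apply_of_dual {k W P ι : Type*} [CommRing k] [AddCommGroup W]
    [Module k W] [AddTorsor W P] [Fintype ι] [DecidableEq ι] {p : ι → P} {b : ι → P →ᵃ[k] k}
    (hb : ∀ i j, b i (p j) = if i = j then 1 else 0) (c : ι → k) (j : ι) :
    (∑ i, c i • b i) (p j) = c j := by
  simp [AffineMap.finset_sum_apply, hb]

theorem AffineMap.eq_sum_apply_of_mem_convexHull {𝕜 E W₂ ι : Type*} [Ring 𝕜] [PartialOrder 𝕜]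
    [AddCommGroup E] [Module 𝕜 E] [AddCommGroup W₂] [Module 𝕜 W₂] {S : Set E} {F : E →ᵃ[𝕜] W₂}
    (t : Finset ι) {G : ι → E →ᵃ[𝕜] W₂} (h : ∀ x ∈ S, F x = ∑ j ∈ t, G j x) :
    ∀ x ∈ convexHull 𝕜 S, F x = ∑ j ∈ t, G j x := by
  have hS : S.EqOn F ⇑(∑ j ∈ t, G j) := fun x hx => by
    rw [AffineMap.finset_sum_apply, h x hx]
  intro x hx
  simpa only [AffineMap.finset_sum_apply] using
    AffineMap.eqOn_affineSpan hS (convexHull_subset_affineSpan S hx)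

theorem mem_effectAlgebra_convexHull {S : Set V} {F : V →ᵃ[ℝ] ℝ}
    (hF : ∀ x ∈ S, F x ∈ Set.Icc (0 : ℝ) 1) :
    F ∈ effectAlgebra (convexHull ℝ S) :=
  convexHull_min hF ((convex_Icc 0 1).affine_preimage F)

/-- On a simplex, any two measurements are compatible: they admit a joint
measurement with effects in `E(K)`. -/
theorem simplex_all_measurements_compatible
    {n : ℕ} (s : Fin n → V) (hs : AffineIndependent ℝ s)
    (K : Set V) (hK : K = convexHull ℝ (Set.range s))
    {n₁ n₂ : ℕ} (f : Fin n₁ → (V →ᵃ[ℝ] ℝ)) (g : Fin n₂ → (V →ᵃ[ℝ] ℝ))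
    (hf : ∀ i, f i ∈ effectAlgebra K) (hg : ∀ j, g j ∈ effectAlgebra K)
    (hfsum : ∀ x ∈ K, ∑ i, f i x = 1) (hgsum : ∀ x ∈ K, ∑ j, g j x = 1) :
    ∃ h : Fin n₁ → Fin n₂ → (V →ᵃ[ℝ] ℝ),
      (∀ i j, h i j ∈ effectAlgebra K) ∧
      (∀ i, ∀ x ∈ K, f i x = ∑ j, h i j x) ∧
      (∀ j, ∀ x ∈ K, g j x = ∑ i, h i j x) := by
  subst hK
  obtain ⟨b, hb⟩ := hs.exists_affineMap_dual
  have hsK : ∀ l, s l ∈ convexHull ℝ (Set.range s) := fun l => subset_convexHull ℝ _ ⟨l, rfl⟩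
  have hvertex : ∀ i j l, (∑ k, (f i (s k) * g j (s k)) • b k) (s l) = f i (s l) * g j (s l) :=
    fun i j => AffineMap.sum_smul_apply_of_dual hb _
  refine ⟨fun i j => ∑ k, (f i (s k) * g j (s k)) • b k, fun i j => ?_, fun i => ?_, fun j => ?_⟩
  · refine mem_effectAlgebra_convexHull (Set.forall_mem_range.2 fun l => ?_)
    rw [hvertex]
    exact unitInterval.mul_mem (hf i _ (hsK l)) (hg j _ (hsK l))
  · refine AffineMap.eq_sum_apply_of_mem_convexHull _ (Set.forall_mem_range.2 fun l => ?_)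
    simp only [hvertex, ← mul_sum, hgsum _ (hsK l), mul_one]
  · refine AffineMap.eq_sum_apply_of_mem_convexHull _ (Set.forall_mem_range.2 fun l => ?_)
    simp only [hvertex, ← sum_mul, hfsum _ (hsK l), one_mul]
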